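/- Let $z: [0,\pi]\times[0,2\pi] \to \mathbb{R}^3$ be a $C^2$ parameterized surface with $z_\theta \times z_\phi \neq 0$ everywhere, let $\nu = \frac{z_\theta\times z_\phi}{|z_\theta\times z_\phi|}$, let $u:\mathbb{R}^3\to\mathbb{C}$ be $C^2$, and define $G(z) := \nu\cdot\nabla u(z)$ pointwise. Then for a $C^2$ perturbation $h$, the Gâteaux derivative $\frac{d}{dt}\big|_{t=0} G(z+th)$ at each point equals $\frac{1}{|z_\theta\times z_\phi|}\left((I-\nu\nu^\top)(h_\theta\times z_\phi + z_\theta\times h_\phi)\right)\cdot\nabla u(z) + \nu\cdot\left(\nabla\nabla^\top u(z)\,h\right)$. -/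

import Mathlib

noncomputable section

/-- The cross product on `ℝ³ = EuclideanSpace ℝ (Fin 3)`. -/
def cross3 (a b : EuclideanSpace ℝ (Fin 3)) : EuclideanSpace ℝ (Fin 3) :=
  (EuclideanSpace.equiv (Fin 3) ℝ).symm
    (crossProduct ((EuclideanSpace.equiv (Fin 3) ℝ) a) ((EuclideanSpace.equiv (Fin 3) ℝ) b))

/-- Partial derivative in `θ` (first parameter) of a parameterized surface. -/
def dTheta (z : ℝ × ℝ → EuclideanSpace ℝ (Fin 3)) (p : ℝ × ℝ) : EuclideanSpace ℝ (Fin 3) :=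
  fderiv ℝ z p (1, 0)

/-- Partial derivative in `φ` (second parameter) of a parameterized surface. -/
def dPhi (z : ℝ × ℝ → EuclideanSpace ℝ (Fin 3)) (p : ℝ × ℝ) : EuclideanSpace ℝ (Fin 3) :=
  fderiv ℝ z p (0, 1)

/-- The unit normal `ν = (z_θ × z_φ)/|z_θ × z_φ|` of a parameterized surface. -/
def surfNormal (z : ℝ × ℝ → EuclideanSpace ℝ (Fin 3)) (p : ℝ × ℝ) : EuclideanSpace ℝ (Fin 3) :=
  ‖cross3 (dTheta z p) (dPhi z p)‖⁻¹ • cross3 (dTheta z p) (dPhi z p)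

/-- First partial derivative `∂_i u` of `u : ℝ³ → ℂ`. -/
def partial1 (u : EuclideanSpace ℝ (Fin 3) → ℂ) (x : EuclideanSpace ℝ (Fin 3)) (i : Fin 3) : ℂ :=
  fderiv ℝ u x (EuclideanSpace.single i 1)

/-- Second partial derivative `∂_i ∂_j u` of `u : ℝ³ → ℂ` (Hessian entry). -/
def partial2 (u : EuclideanSpace ℝ (Fin 3) → ℂ) (x : EuclideanSpace ℝ (Fin 3)) (i j : Fin 3) : ℂ :=
  fderiv ℝ (fun y => fderiv ℝ u y (EuclideanSpace.single j 1)) x (EuclideanSpace.single i 1)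

/-- The boundary operator `G(z) = ν·∇u(z)` for a parameterized surface `z`, pointwise. -/
def bdryOp (u : EuclideanSpace ℝ (Fin 3) → ℂ) (z : ℝ × ℝ → EuclideanSpace ℝ (Fin 3))
    (p : ℝ × ℝ) : ℂ :=
  ∑ i : Fin 3, ((surfNormal z p i : ℝ) : ℂ) * partial1 u (z p) i

/-! Along `z + t h` the tangent vectors are affine in `t`, so the unnormalised normal
`c(t) = (z_θ + t h_θ) × (z_φ + t h_φ)` has `c'(0) = h_θ × z_φ + z_θ × h_φ`, and differentiating the
normalisation `c ↦ c / ‖c‖` produces the tangential projection `(I - ννᵀ) c'(0) / ‖c(0)‖`.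
The factor `∇u(z + t h)` contributes the Hessian term; matching it with the index order of
`partial2` uses the symmetry of the second derivative of the `C²` function `u`. -/

local notation "ℝ³" => EuclideanSpace ℝ (Fin 3)

open scoped InnerProductSpace

section Normalize

variable {E : Type*} [NormedAddCommGroup E] [InnerProductSpace ℝ E]
  {f : ℝ → E} {f' : E} {t : ℝ}

theorem HasDerivAt.norm (hf : HasDerivAt f f' t) (h0 : f t ≠ 0) :
    HasDerivAt (fun s => ‖f s‖) (⟪f t, f'⟫_ℝ / ‖f t‖) t := by
  have hsq := hf.norm_sq.sqrt (by positivity)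
  simp only [Real.sqrt_sq (norm_nonneg _)] at hsq
  convert hsq using 1
  field_simp

theorem HasDerivAt.inv_norm_smul (hf : HasDerivAt f f' t) (h0 : f t ≠ 0) :
    HasDerivAt (fun s => ‖f s‖⁻¹ • f s)
      (‖f t‖⁻¹ • (f' - ⟪‖f t‖⁻¹ • f t, f'⟫_ℝ • (‖f t‖⁻¹ • f t))) t := by
  have hN : ‖f t‖ ≠ 0 := norm_ne_zero_iff.mpr h0
  refine (((hf.norm h0).inv hN).smul hf).congr_deriv ?_
  rw [real_inner_smul_left, Pi.inv_apply]
  module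

end Normalize

def cross3CLM : ℝ³ →L[ℝ] ℝ³ →L[ℝ] ℝ³ :=
  LinearMap.toContinuousLinearMap <| LinearMap.toContinuousLinearMap.toLinearMap ∘ₗ
    (crossProduct.compl₁₂ (EuclideanSpace.equiv (Fin 3) ℝ).toLinearMap
      (EuclideanSpace.equiv (Fin 3) ℝ).toLinearMap).compr₂
      (EuclideanSpace.equiv (Fin 3) ℝ).symm.toLinearMap

theorem cross3CLM_apply (a b : ℝ³) : cross3CLM a b = cross3 a b := rfl

theorem HasDerivAt.cross3 {a b : ℝ → ℝ³} {a' b' : ℝ³} {t : ℝ} (ha : HasDerivAt a a' t)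
    (hb : HasDerivAt b b' t) :
    HasDerivAt (fun s => cross3 (a s) (b s)) (cross3 a' (b t) + cross3 (a t) b') t := by
  simpa only [cross3CLM_apply, add_comm] using cross3CLM.hasDerivAt_of_bilinear
    (fun _ => ha) (fun _ => hb)

theorem fderiv_add_smul {E F : Type*} [NormedAddCommGroup E] [NormedSpace ℝ E]
    [NormedAddCommGroup F] [NormedSpace ℝ F] {z h : E → F} {p : E}
    (hz : DifferentiableAt ℝ z p) (hh : DifferentiableAt ℝ h p) (t : ℝ) :
    fderiv ℝ (fun q => z q + t • h q) p = fderiv ℝ z p + t • fderiv ℝ h p :=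
  (hz.hasFDerivAt.add (hh.hasFDerivAt.const_smul t)).fderiv

theorem hasDerivAt_add_smul {F : Type*} [NormedAddCommGroup F] [NormedSpace ℝ F] (a v : F)
    (s : ℝ) : HasDerivAt (fun t : ℝ => a + t • v) v s := by
  simpa using ((hasDerivAt_id s).smul_const v).const_add a

section Surface

variable {z h : ℝ × ℝ → ℝ³} {p : ℝ × ℝ}

theorem cross3_dTheta_dPhi_add_smul (hz : DifferentiableAt ℝ z p)
    (hh : DifferentiableAt ℝ h p) (t : ℝ) :
    cross3 (dTheta (fun q => z q + t • h q) p) (dPhi (fun q => z q + t • h q) p) =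
      cross3 (dTheta z p + t • dTheta h p) (dPhi z p + t • dPhi h p) := by
  simp only [dTheta, dPhi, fderiv_add_smul hz hh, add_apply, smul_apply]

theorem hasDerivAt_surfNormal_add_smul (hz : DifferentiableAt ℝ z p)
    (hh : DifferentiableAt ℝ h p) (h0 : cross3 (dTheta z p) (dPhi z p) ≠ 0) :
    HasDerivAt (fun t : ℝ => surfNormal (fun q => z q + t • h q) p)
      (‖cross3 (dTheta z p) (dPhi z p)‖⁻¹ •
        ((cross3 (dTheta h p) (dPhi z p) + cross3 (dTheta z p) (dPhi h p)) -
          ⟪surfNormal z p, cross3 (dTheta h p) (dPhi z p) + cross3 (dTheta z p) (dPhi h p)⟫_ℝ •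
            surfNormal z p)) 0 := by
  have hc := (hasDerivAt_add_smul (dTheta z p) (dTheta h p) 0).cross3
    (hasDerivAt_add_smul (dPhi z p) (dPhi h p) 0)
  simp only [zero_smul, add_zero] at hc
  have hν := hc.inv_norm_smul (by simpa only [zero_smul, add_zero] using h0)
  simp only [zero_smul, add_zero] at hν
  have hfun : (fun t : ℝ => surfNormal (fun q => z q + t • h q) p) = fun t =>
      ‖cross3 (dTheta z p + t • dTheta h p) (dPhi z p + t • dPhi h p)‖⁻¹ •
        cross3 (dTheta z p + t • dTheta h p) (dPhi z p + t • dPhi h p) := by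
    funext t
    rw [surfNormal, cross3_dTheta_dPhi_add_smul hz hh]
  rw [hfun]
  exact hν

end Surface

theorem fderiv_fderiv_apply_comm {E F : Type*} [NormedAddCommGroup E] [NormedSpace ℝ E]
    [NormedAddCommGroup F] [NormedSpace ℝ F] {u : E → F} {x : E}
    (hd : DifferentiableAt ℝ (fderiv ℝ u) x) (hs : IsSymmSndFDerivAt ℝ u x) (v w : E) :
    fderiv ℝ (fun y => fderiv ℝ u y v) x w = fderiv ℝ (fun y => fderiv ℝ u y w) x v := by
  rw [fderiv_clm_apply hd (differentiableAt_const v), fderiv_clm_apply hd (differentiableAt_const w)]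
  simpa using hs w v

section SecondDerivative

variable {u : ℝ³ → ℂ} {x : ℝ³}

theorem fderiv_partial1_apply (hu : ContDiffAt ℝ 2 u x) (i : Fin 3) (v : ℝ³) :
    fderiv ℝ (fun y => partial1 u y i) x v = ∑ j, partial2 u x i j * (v j : ℂ) := by
  have hd : DifferentiableAt ℝ (fderiv ℝ u) x :=
    (hu.fderiv_right le_rfl).differentiableAt one_ne_zero
  have hs : IsSymmSndFDerivAt ℝ u x := hu.isSymmSndFDerivAt (by simp)
  conv_lhs => rw [← (EuclideanSpace.basisFun (Fin 3) ℝ).sum_repr v, map_sum]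
  refine Finset.sum_congr rfl fun j _ => ?_
  rw [map_smul, EuclideanSpace.basisFun_apply, EuclideanSpace.basisFun_repr, Complex.real_smul,
    mul_comm, partial2]
  exact congrArg (· * _) (fderiv_fderiv_apply_comm hd hs _ _)

theorem hasDerivAt_partial1_add_smul (hu : ContDiffAt ℝ 2 u x) (i : Fin 3) (v : ℝ³) :
    HasDerivAt (fun t : ℝ => partial1 u (x + t • v) i) (∑ j, partial2 u x i j * (v j : ℂ)) 0 := by
  have hg : DifferentiableAt ℝ (fun y => partial1 u y i) x :=
    ((hu.fderiv_right le_rfl).differentiableAt one_ne_zero).clm_apply (differentiableAt_const _)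
  rw [← fderiv_partial1_apply hu i v]
  exact hg.hasFDerivAt.comp_hasDerivAt_of_eq 0 (hasDerivAt_add_smul x v 0) (by simp)

end SecondDerivative

/-- Theorem 3.2 of the paper: for a `C²` parameterized surface `z` with
`z_θ × z_φ ≠ 0`, `ν = (z_θ × z_φ)/|z_θ × z_φ|`, a `C²` function `u : ℝ³ → ℂ`,
`G(z) = ν·∇u(z)`, and a `C²` perturbation `h`, the Gâteaux derivative
`d/dt|_{t=0} G(z+th)` at each point equals
`(1/|z_θ×z_φ|)((I-ννᵀ)(h_θ×z_φ + z_θ×h_φ))·∇u(z) + ν·(∇∇ᵀu(z) h)`. -/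
theorem boundary_operator_gateaux_deriv_3D
    (z h : ℝ × ℝ → EuclideanSpace ℝ (Fin 3)) (hz : ContDiff ℝ 2 z) (hh : ContDiff ℝ 2 h)
    (hz' : ∀ p : ℝ × ℝ, cross3 (dTheta z p) (dPhi z p) ≠ 0)
    (u : EuclideanSpace ℝ (Fin 3) → ℂ) (hu : ContDiff ℝ 2 u) (p : ℝ × ℝ) :
    HasDerivAt (fun t : ℝ => bdryOp u (fun q => z q + t • h q) p)
      ((∑ i : Fin 3,
          (((‖cross3 (dTheta z p) (dPhi z p)‖⁻¹ •
                ((cross3 (dTheta h p) (dPhi z p) + cross3 (dTheta z p) (dPhi h p)) -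
                  (inner ℝ (surfNormal z p)
                      (cross3 (dTheta h p) (dPhi z p) + cross3 (dTheta z p) (dPhi h p)) : ℝ) •
                    surfNormal z p)) i : ℝ) : ℂ) *
            partial1 u (z p) i) +
        ∑ i : Fin 3, ((surfNormal z p i : ℝ) : ℂ) *
          ∑ j : Fin 3, partial2 u (z p) i j * ((h p j : ℝ) : ℂ)) 0 := by
  have hν := hasDerivAt_surfNormal_add_smul (hz.differentiable two_ne_zero p)
    (hh.differentiable two_ne_zero p) (hz' p)
  have hsum := HasDerivAt.fun_sum (u := Finset.univ) fun i _ =>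
    (((EuclideanSpace.proj i).hasFDerivAt.comp_hasDerivAt 0 hν).ofReal_comp).mul
      (hasDerivAt_partial1_add_smul (hu.contDiffAt (x := z p)) i (h p))
  simp only [Function.comp_apply, zero_smul, add_zero] at hsum
  rw [← Finset.sum_add_distrib]
  exact hsum
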